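/- With notation as above, the vector $\mathbf{f}_n$ with entries $2^{n-3}$ at position $(\mathbf{0}|0)$, $-(2^{n-3}-1)$ at position $(\mathbf{0}|1)$, $-1$ at positions $(\mathbf{i}|0)$ for $\mathbf{1}\cdot\mathbf{i}$ odd, $+1$ at positions $(\mathbf{i}|1)$ for $\mathbf{i} \neq \mathbf{0}$ with $\mathbf{1}\cdot\mathbf{i}$ even, and $0$ elsewhere, is a circuit of the matrix $\Gamma^n = \begin{pmatrix} A(B_n) & A(B_n) \\ \mathbf{1} & \mathbf{0} \\ \mathbf{0} & \mathbf{1} \end{pmatrix}$. -/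
import Mathlib


def marginMatrix (n : ℕ) (R : Type*) [Zero R] [One R] :
    Matrix (Σ j : Fin (n-2), ({x : Fin (n-2) // x ≠ j} → Fin 2)) ((Fin (n-2)) → Fin 2) R :=
  fun r i => if (∀ x : {x : Fin (n-2) // x ≠ r.1}, i x.1 = r.2 x) then 1 else 0

def IsCircuit {R C : Type*} [Fintype C] (A : Matrix R C ℤ) (w : C → ℤ) : Prop :=
  w ≠ 0 ∧ A.mulVec w = 0 ∧
  (∀ z : C → ℤ, z ≠ 0 → A.mulVec z = 0 →
    Function.support z ⊆ Function.support w → Function.support z = Function.support w) ∧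
  Finset.univ.gcd w = 1

/-- The matrix `Γ^n = [[A(B_n), A(B_n)], [1, 0], [0, 1]]` with columns indexed by
pairs `(i | l)`, `i ∈ {0,1}^{n-2}`, `l ∈ {0,1}`. -/
def gammaN (n : ℕ) :
    Matrix ((Σ j : Fin (n-2), ({x : Fin (n-2) // x ≠ j} → Fin 2)) ⊕ Fin 2)
      (((Fin (n-2)) → Fin 2) × Fin 2) ℤ :=
  fun r c =>
    match r with
    | Sum.inl r => marginMatrix n ℤ r c.1
    | Sum.inr l => if c.2 = l then 1 else 0

/-- The vector `f_n`: `2^{n-3}` at `(0|0)`, `-(2^{n-3}-1)` at `(0|1)`, `-1` at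
`(i|0)` for odd `i`, `+1` at `(i|1)` for nonzero even `i`, and `0` elsewhere. -/
def fN (n : ℕ) : (((Fin (n-2)) → Fin 2) × Fin 2) → ℤ :=
  fun c =>
    if c.1 = 0 then (if c.2 = 0 then 2^(n-3) else -(2^(n-3) - 1))
    else if (∑ x, (c.1 x : ℕ)) % 2 = 1 then (if c.2 = 0 then -1 else 0)
    else (if c.2 = 1 then 1 else 0)

namespace FNaux
variable {m : ℕ}

/-- Extend an assignment on coordinates `≠ j` by value `b` at `j`. -/
def ext (j : Fin m) (y : {x : Fin m // x ≠ j} → Fin 2) (b : Fin 2) : Fin m → Fin 2 :=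
  fun x => if h : x = j then b else y ⟨x, h⟩

@[simp] lemma ext_self (j : Fin m) (y : {x : Fin m // x ≠ j} → Fin 2) (b : Fin 2) :
    ext j y b j = b := by simp [ext]

lemma ext_ne (j : Fin m) (y : {x : Fin m // x ≠ j} → Fin 2) (b : Fin 2)
    {x : Fin m} (h : x ≠ j) : ext j y b x = y ⟨x, h⟩ := by simp [ext, h]

/-- The sign vector. -/
def G (i : Fin m → Fin 2) : ℤ := if (∑ x, (i x : ℕ)) % 2 = 1 then -1 else 1

@[simp] lemma G_zero : G (0 : Fin m → Fin 2) = 1 := by simp [G]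

lemma G_neg_of_sum {i i' : Fin m → Fin 2}
    (h : ∑ x, (i x : ℕ) = 1 + ∑ x, (i' x : ℕ)) : G i = -G i' := by
  unfold G
  rcases Nat.even_or_odd (∑ x, (i' x : ℕ)) with h' | h'
  · rw [Nat.even_iff] at h'
    have h1 : (∑ x, (i x : ℕ)) % 2 = 1 := by omega
    simp [h1, h']
  · rw [Nat.odd_iff] at h'
    have h1 : (∑ x, (i x : ℕ)) % 2 = 0 := by omega
    simp [h1, h']

lemma sum_ext (j : Fin m) (y : {x : Fin m // x ≠ j} → Fin 2) (b : Fin 2) :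
    ∑ x, ((ext j y b) x : ℕ) = (b : ℕ) + ∑ x ∈ Finset.univ.erase j, ((ext j y 0) x : ℕ) := by
  rw [← Finset.add_sum_erase _ _ (Finset.mem_univ j)]
  congr 1
  · simp
  · exact Finset.sum_congr rfl fun x hx => by
      rw [ext_ne _ _ _ (Finset.ne_of_mem_erase hx), ext_ne _ _ _ (Finset.ne_of_mem_erase hx)]

lemma G_ext_add (j : Fin m) (y : {x : Fin m // x ≠ j} → Fin 2) :
    G (ext j y 0) + G (ext j y 1) = 0 := by
  have h := G_neg_of_sum (i := ext j y 1) (i' := ext j y 0)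
    (by rw [sum_ext j y 1, sum_ext j y 0]; simp)
  rw [h]; ring

lemma eq_ext (j : Fin m) (i : Fin m → Fin 2) :
    i = ext j (fun x => i x.1) (i j) := by
  funext x
  by_cases h : x = j
  · subst h; simp
  · rw [ext_ne _ _ _ h]

/-- The columns hit by a margin row. -/
lemma filter_margin (j : Fin m) (y : {x : Fin m // x ≠ j} → Fin 2) :
    (Finset.univ.filter (fun i : Fin m → Fin 2 => ∀ x : {x : Fin m // x ≠ j}, i x.1 = y x))
      = {ext j y 0, ext j y 1} := by
  ext i
  simp only [Finset.mem_filter, Finset.mem_univ, true_and, Finset.mem_insert,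
    Finset.mem_singleton]
  constructor
  · intro h
    have hy : (fun x : {x : Fin m // x ≠ j} => i x.1) = y := funext fun x => h x
    have hij : i j = 0 ∨ i j = 1 := by omega
    rcases hij with h0 | h0
    · left; rw [eq_ext j i, hy, h0]
    · right; rw [eq_ext j i, hy, h0]
  · rintro (rfl | rfl) <;> intro x <;> rw [ext_ne _ _ _ x.2]

lemma ext_zero_ne_one (j : Fin m) (y : {x : Fin m // x ≠ j} → Fin 2) :
    ext j y 0 ≠ ext j y 1 := by
  intro h
  have := congrFun h j
  simp at this

lemma sum_G (hm : 1 ≤ m) : ∑ i : Fin m → Fin 2, G i = 0 := by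
  have j0 : Fin m := ⟨0, hm⟩
  refine Finset.sum_involution (fun i _ => Function.update i j0 (i j0 + 1)) ?h1 ?h2 ?h3 ?h4
  · intro i _
    have hsum : ∀ b : Fin 2, ∑ x, ((Function.update i j0 b) x : ℕ)
        = (b : ℕ) + ∑ x ∈ Finset.univ.erase j0, (i x : ℕ) := by
      intro b
      rw [← Finset.add_sum_erase _ _ (Finset.mem_univ j0)]
      congr 1
      · simp
      · exact Finset.sum_congr rfl fun x hx => by
          rw [Function.update_of_ne (Finset.ne_of_mem_erase hx)]
    have hsum2 : ∑ x, (i x : ℕ) = (i j0 : ℕ) + ∑ x ∈ Finset.univ.erase j0, (i x : ℕ) :=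
      (Finset.add_sum_erase _ _ (Finset.mem_univ j0)).symm
    have h01 : i j0 = 0 ∨ i j0 = 1 := by omega
    rcases h01 with h0 | h0
    · have hb : i j0 + 1 = 1 := by rw [h0]; decide
      have : G (Function.update i j0 (i j0 + 1)) = -G i := by
        apply G_neg_of_sum
        rw [hsum, hsum2, hb, h0]; norm_num
      rw [this]; ring
    · have hb : i j0 + 1 = 0 := by rw [h0]; decide
      have : G i = -G (Function.update i j0 (i j0 + 1)) := by
        apply G_neg_of_sum
        rw [hsum, hsum2, hb, h0]; norm_num
      rw [this]; ring
  · intro i _ _ h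
    have := congrFun h j0
    simp at this
  · intro i _; exact Finset.mem_univ _
  · intro i _
    funext x
    by_cases h : x = j0
    · subst h; simp
      exact (by decide : ∀ a : Fin 2, a + 1 + 1 = a) _
    · simp [Function.update_of_ne h]

lemma mulVec_inl (n : ℕ) (w : ((Fin (n-2) → Fin 2) × Fin 2) → ℤ)
    (j : Fin (n-2)) (y : {x : Fin (n-2) // x ≠ j} → Fin 2) :
    (gammaN n).mulVec w (Sum.inl ⟨j, y⟩)
      = (w (ext j y 0, 0) + w (ext j y 0, 1)) + (w (ext j y 1, 0) + w (ext j y 1, 1)) := by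
  unfold Matrix.mulVec dotProduct gammaN marginMatrix
  rw [Fintype.sum_prod_type]
  simp only [Fin.sum_univ_two]
  have : ∀ i : Fin (n-2) → Fin 2,
      (if (∀ x : {x : Fin (n-2) // x ≠ j}, i x.1 = y x) then (1:ℤ) else 0) * w (i, 0)
      + (if (∀ x : {x : Fin (n-2) // x ≠ j}, i x.1 = y x) then (1:ℤ) else 0) * w (i, 1)
      = if (∀ x : {x : Fin (n-2) // x ≠ j}, i x.1 = y x) then w (i, 0) + w (i, 1) else 0 := by
    intro i; split <;> simp
  rw [Finset.sum_congr rfl (fun i _ => this i), ← Finset.sum_filter, filter_margin,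
    Finset.sum_pair (ext_zero_ne_one j y)]

lemma mulVec_inr (n : ℕ) (w : ((Fin (n-2) → Fin 2) × Fin 2) → ℤ) (l : Fin 2) :
    (gammaN n).mulVec w (Sum.inr l) = ∑ i : Fin (n-2) → Fin 2, w (i, l) := by
  unfold Matrix.mulVec dotProduct gammaN
  rw [Fintype.sum_prod_type]
  refine Finset.sum_congr rfl fun i _ => ?_
  simp only [ite_mul, one_mul, zero_mul]
  rw [Finset.sum_ite_eq' Finset.univ l (fun l' => w (i, l'))]
  simp

/-- Any function satisfying the margin relations is proportional to `G`. -/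
lemma prop_to_G (h : (Fin m → Fin 2) → ℤ)
    (hh : ∀ (j : Fin m) (y : {x : Fin m // x ≠ j} → Fin 2),
      h (ext j y 0) + h (ext j y 1) = 0) :
    ∀ i, h i = G i * h 0 := by
  suffices key : ∀ N (i : Fin m → Fin 2), ∑ x, (i x : ℕ) = N → h i = G i * h 0 by
    intro i; exact key _ i rfl
  intro N
  induction N with
  | zero =>
    intro i hi
    have : i = 0 := by
      funext x
      have := (Finset.sum_eq_zero_iff.mp hi) x (Finset.mem_univ x)
      simp only [Pi.zero_apply]
      omega
    subst this
    simp
  | succ N ih =>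
    intro i hi
    have hex : ∃ j, i j = 1 := by
      by_contra hc
      push_neg at hc
      have : ∀ j, i j = 0 := by intro j; have := hc j; omega
      have : ∑ x, (i x : ℕ) = 0 := Finset.sum_eq_zero fun x _ => by rw [this x]; rfl
      omega
    obtain ⟨j, hj⟩ := hex
    set y : {x : Fin m // x ≠ j} → Fin 2 := fun x => i x.1 with hy
    have hei : ext j y 1 = i := by rw [← hj]; exact (eq_ext j i).symm
    have hsum1 : ∑ x, ((ext j y 1) x : ℕ) = 1 + ∑ x, ((ext j y 0) x : ℕ) := by
      rw [sum_ext j y 1, sum_ext j y 0]; simp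
    have hsum0 : ∑ x, ((ext j y 0) x : ℕ) = N := by
      rw [hei] at hsum1; omega
    have hIH := ih (ext j y 0) hsum0
    have hmg := hh j y
    rw [hei] at hmg
    have hG : G i = -G (ext j y 0) := by
      apply G_neg_of_sum
      rw [← hei]; exact hsum1
    rw [hG]
    have : h i = -h (ext j y 0) := by linarith
    rw [this, hIH]; ring

end FNaux

open FNaux in
/-- `fN n (i,0) + fN n (i,1) = G i`. -/
lemma fN_pair (n : ℕ) (i : Fin (n-2) → Fin 2) :
    fN n (i, 0) + fN n (i, 1) = G i := by
  unfold fN G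
  by_cases h0 : i = 0
  · subst h0
    simp only [if_pos rfl]
    norm_num
  · simp only [if_neg h0]
    split <;> norm_num

open FNaux in
lemma sum_fN (n : ℕ) (hn : 4 ≤ n) (l : Fin 2) :
    ∑ i : Fin (n-2) → Fin 2, fN n (i, l) = 0 := by
  have hm : 1 ≤ n - 2 := by omega
  have hcard : (Finset.univ.erase (0 : Fin (n-2) → Fin 2)).card = 2^(n-2) - 1 := by
    rw [Finset.card_erase_of_mem (Finset.mem_univ _), Finset.card_univ, Fintype.card_fun]
    simp
  have hGerase : ∑ i ∈ Finset.univ.erase (0 : Fin (n-2) → Fin 2), G i = -1 := by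
    have := Finset.add_sum_erase Finset.univ G (Finset.mem_univ (0 : Fin (n-2) → Fin 2))
    rw [sum_G hm] at this
    simp only [G_zero] at this
    linarith
  have hpow : (2:ℤ)^(n-2) = 2 * 2^(n-3) := by
    have : n - 2 = (n-3) + 1 := by omega
    rw [this, pow_succ]; ring
  have hcast : ((2^(n-2) - 1 : ℕ) : ℤ) = 2^(n-2) - 1 := by
    have : 1 ≤ 2^(n-2) := Nat.one_le_two_pow
    push_cast [this]; ring
  rcases (by omega : (l : ℕ) = 0 ∨ (l : ℕ) = 1) with hl | hl
  · have hl' : l = 0 := by omega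
    subst hl'
    rw [← Finset.add_sum_erase _ _ (Finset.mem_univ (0 : Fin (n-2) → Fin 2))]
    have h1 : fN n ((0 : Fin (n-2) → Fin 2), 0) = 2^(n-3) := by simp [fN]
    have h2 : ∀ i ∈ Finset.univ.erase (0 : Fin (n-2) → Fin 2),
        2 * fN n (i, 0) = G i - 1 := by
      intro i hi
      have hi0 : i ≠ 0 := Finset.ne_of_mem_erase hi
      unfold fN G
      simp only [if_neg hi0]
      split <;> norm_num
    have h3 : 2 * ∑ i ∈ Finset.univ.erase (0 : Fin (n-2) → Fin 2), fN n (i, 0)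
        = 2 * (-(2^(n-3))) := by
      rw [Finset.mul_sum, Finset.sum_congr rfl h2, Finset.sum_sub_distrib, hGerase,
        Finset.sum_const, hcard, nsmul_eq_mul, hcast, mul_one]
      rw [hpow]; ring
    have h4 := mul_left_cancel₀ (by norm_num : (2:ℤ) ≠ 0) h3
    rw [h1, h4]; ring
  · have hl' : l = 1 := by omega
    subst hl'
    rw [← Finset.add_sum_erase _ _ (Finset.mem_univ (0 : Fin (n-2) → Fin 2))]
    have h1 : fN n ((0 : Fin (n-2) → Fin 2), 1) = -(2^(n-3) - 1) := by simp [fN]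
    have h2 : ∀ i ∈ Finset.univ.erase (0 : Fin (n-2) → Fin 2),
        2 * fN n (i, 1) = G i + 1 := by
      intro i hi
      have hi0 : i ≠ 0 := Finset.ne_of_mem_erase hi
      unfold fN G
      simp only [if_neg hi0]
      split <;> norm_num
    have h3 : 2 * ∑ i ∈ Finset.univ.erase (0 : Fin (n-2) → Fin 2), fN n (i, 1)
        = 2 * (2^(n-3) - 1) := by
      rw [Finset.mul_sum, Finset.sum_congr rfl h2, Finset.sum_add_distrib, hGerase,
        Finset.sum_const, hcard, nsmul_eq_mul, hcast, mul_one]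
      rw [hpow]; ring
    have h4 := mul_left_cancel₀ (by norm_num : (2:ℤ) ≠ 0) h3
    rw [h1, h4]; ring

open FNaux in
lemma GErase (n : ℕ) (hn : 4 ≤ n) :
    ∑ i ∈ Finset.univ.erase (0 : Fin (n-2) → Fin 2), G i = -1 := by
  have hm : 1 ≤ n - 2 := by omega
  have := Finset.add_sum_erase Finset.univ G (Finset.mem_univ (0 : Fin (n-2) → Fin 2))
  rw [sum_G hm] at this
  simp only [G_zero] at this
  linarith

lemma cardErase (n : ℕ) :
    (Finset.univ.erase (0 : Fin (n-2) → Fin 2)).card = 2^(n-2) - 1 := by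
  rw [Finset.card_erase_of_mem (Finset.mem_univ _), Finset.card_univ, Fintype.card_fun]
  simp

open FNaux in
lemma two_mul_sum_erase (n : ℕ) (hn : 4 ≤ n) (F : (Fin (n-2) → Fin 2) → ℤ) (c ε : ℤ)
    (hF : ∀ i ∈ Finset.univ.erase (0 : Fin (n-2) → Fin 2), 2 * F i = (G i + ε) * c) :
    2 * ∑ i ∈ Finset.univ.erase (0 : Fin (n-2) → Fin 2), F i
      = (-1 + (2^(n-2) - 1) * ε) * c := by
  have hcast : ((2^(n-2) - 1 : ℕ) : ℤ) = 2^(n-2) - 1 := by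
    have : 1 ≤ 2^(n-2) := Nat.one_le_two_pow
    push_cast [this]; ring
  rw [Finset.mul_sum, Finset.sum_congr rfl hF, ← Finset.sum_mul, Finset.sum_add_distrib,
    GErase n hn, Finset.sum_const, cardErase n, nsmul_eq_mul, hcast]

open FNaux in
/-- Sullivant's vector `f_n` is a circuit of `Γ^n`. -/
theorem fN_isCircuit_gammaN (n : ℕ) (hn : 4 ≤ n) :
    IsCircuit (gammaN n) (fN n) := by
  have hpow : (2:ℤ)^(n-2) = 2 * 2^(n-3) := by
    have : n - 2 = (n-3) + 1 := by omega
    rw [this, pow_succ]; ring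
  have htwo : (2:ℤ) ≠ 0 := by norm_num
  refine ⟨?_, ?_, ?_, ?_⟩
  · -- fN ≠ 0
    intro h
    have := congrFun h ((0 : Fin (n-2) → Fin 2), 0)
    simp [fN] at this
  · -- kernel
    funext r
    match r with
    | Sum.inl ⟨j, y⟩ =>
      rw [mulVec_inl, fN_pair, fN_pair]
      simpa using G_ext_add j y
    | Sum.inr l =>
      rw [mulVec_inr, sum_fN n hn l]
      simp
  · -- minimality
    intro z hz hker hsupp
    have hrow : ∀ r, (gammaN n).mulVec z r = 0 := fun r => congrFun hker r
    set h : (Fin (n-2) → Fin 2) → ℤ := fun i => z (i, 0) + z (i, 1) with hdef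
    have hmargin : ∀ (j : Fin (n-2)) (y : {x : Fin (n-2) // x ≠ j} → Fin 2),
        h (ext j y 0) + h (ext j y 1) = 0 := by
      intro j y
      have := hrow (Sum.inl ⟨j, y⟩)
      rw [mulVec_inl] at this
      simpa [hdef] using this
    set c := h 0 with hc0
    have hprop : ∀ i, h i = G i * c := prop_to_G h hmargin
    -- support facts
    have hsupp' : ∀ p, fN n p = 0 → z p = 0 := by
      intro p hp
      by_contra hzp
      exact hzp (by exact_mod_cast absurd (hsupp hzp) (by simp [Function.mem_support, hp]))
    have hodd : ∀ i : Fin (n-2) → Fin 2, (∑ x, (i x : ℕ)) % 2 = 1 → z (i, 1) = 0 := by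
      intro i hi
      apply hsupp'
      have hi0 : i ≠ 0 := by
        intro h0
        rw [h0] at hi
        simp at hi
      simp [fN, hi0, hi]
    have heven : ∀ i : Fin (n-2) → Fin 2, i ≠ 0 → (∑ x, (i x : ℕ)) % 2 = 0 →
        z (i, 0) = 0 := by
      intro i hi0 hi
      apply hsupp'
      simp [fN, hi0, hi]
    -- entries off zero
    have hF0 : ∀ i ∈ Finset.univ.erase (0 : Fin (n-2) → Fin 2),
        2 * z (i, 0) = (G i + (-1)) * c := by
      intro i hi
      have hi0 : i ≠ 0 := Finset.ne_of_mem_erase hi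
      rcases Nat.mod_two_eq_zero_or_one (∑ x, (i x : ℕ)) with hp | hp
      · rw [heven i hi0 hp]
        have : G i = 1 := by unfold G; rw [if_neg (by omega)]
        rw [this]; ring
      · have hz1 : z (i, 1) = 0 := hodd i hp
        have : z (i, 0) = G i * c := by
          have := hprop i
          rw [hdef] at this
          simp only at this
          rw [hz1] at this
          linarith
        rw [this]
        have hG : G i = -1 := by unfold G; rw [if_pos hp]
        rw [hG]; ring
    have hF1 : ∀ i ∈ Finset.univ.erase (0 : Fin (n-2) → Fin 2),
        2 * z (i, 1) = (G i + 1) * c := by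
      intro i hi
      have hi0 : i ≠ 0 := Finset.ne_of_mem_erase hi
      rcases Nat.mod_two_eq_zero_or_one (∑ x, (i x : ℕ)) with hp | hp
      · have hz0 : z (i, 0) = 0 := heven i hi0 hp
        have : z (i, 1) = G i * c := by
          have := hprop i
          rw [hdef] at this
          simp only at this
          rw [hz0] at this
          linarith
        rw [this]
        have hG : G i = 1 := by unfold G; rw [if_neg (by omega)]
        rw [hG]; ring
      · rw [hodd i hp]
        have hG : G i = -1 := by unfold G; rw [if_pos hp]
        rw [hG]; ring
    -- determine z at (0,l)
    have hrow0 := hrow (Sum.inr 0)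
    rw [mulVec_inr, ← Finset.add_sum_erase _ _
      (Finset.mem_univ (0 : Fin (n-2) → Fin 2))] at hrow0
    have hs0 := two_mul_sum_erase n hn (fun i => z (i, 0)) c (-1) hF0
    have hz00 : z (0, 0) = 2^(n-3) * c := by
      have h2 : 2 * z ((0 : Fin (n-2) → Fin 2), 0)
          = 2 * (2^(n-3) * c) := by
        have : 2 * z ((0 : Fin (n-2) → Fin 2), 0)
            = - (2 * ∑ i ∈ Finset.univ.erase (0 : Fin (n-2) → Fin 2), z (i, 0)) := by
          linarith
        rw [this, hs0, hpow]; ring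
      exact mul_left_cancel₀ htwo h2
    have hrow1 := hrow (Sum.inr 1)
    rw [mulVec_inr, ← Finset.add_sum_erase _ _
      (Finset.mem_univ (0 : Fin (n-2) → Fin 2))] at hrow1
    have hs1 := two_mul_sum_erase n hn (fun i => z (i, 1)) c 1 hF1
    have hz01 : z (0, 1) = -(2^(n-3) - 1) * c := by
      have h2 : 2 * z ((0 : Fin (n-2) → Fin 2), 1)
          = 2 * (-(2^(n-3) - 1) * c) := by
        have : 2 * z ((0 : Fin (n-2) → Fin 2), 1)
            = - (2 * ∑ i ∈ Finset.univ.erase (0 : Fin (n-2) → Fin 2), z (i, 1)) := by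
          linarith
        rw [this, hs1, hpow]; ring
      exact mul_left_cancel₀ htwo h2
    -- z = c • fN
    have hzf : ∀ p, z p = c * fN n p := by
      rintro ⟨i, l⟩
      rcases (by omega : l = 0 ∨ l = 1) with rfl | rfl
      · by_cases hi0 : i = 0
        · subst hi0
          rw [hz00]
          simp [fN]; ring
        · rcases Nat.mod_two_eq_zero_or_one (∑ x, (i x : ℕ)) with hp | hp
          · rw [heven i hi0 hp]
            simp [fN, hi0, hp]
          · have hz1 : z (i, 1) = 0 := hodd i hp
            have hzi : z (i, 0) = G i * c := by
              have := hprop i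
              rw [hdef] at this
              simp only at this
              rw [hz1] at this
              linarith
            have hG : G i = -1 := by unfold G; rw [if_pos hp]
            rw [hzi, hG]
            simp [fN, hi0, hp]
      · by_cases hi0 : i = 0
        · subst hi0
          rw [hz01]
          simp [fN]; ring
        · rcases Nat.mod_two_eq_zero_or_one (∑ x, (i x : ℕ)) with hp | hp
          · have hz0 : z (i, 0) = 0 := heven i hi0 hp
            have hzi : z (i, 1) = G i * c := by
              have := hprop i
              rw [hdef] at this
              simp only at this
              rw [hz0] at this
              linarith
            have hG : G i = 1 := by unfold G; rw [if_neg (by omega)]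
            rw [hzi, hG]
            simp [fN, hi0, hp]
          · rw [hodd i hp]
            simp [fN, hi0, hp]
    have hc : c ≠ 0 := by
      intro hc
      apply hz
      funext p
      rw [hzf p, hc]
      simp
    ext p
    simp only [Function.mem_support, hzf p, mul_ne_zero_iff]
    constructor
    · exact fun hp => hp.2
    · exact fun hp => ⟨hc, hp⟩
  · -- gcd
    have hm : 0 < n - 2 := by omega
    set i1 : Fin (n-2) → Fin 2 := fun x => if x = ⟨0, hm⟩ then 1 else 0 with hi1
    have hsum : ∑ x, (i1 x : ℕ) = 1 := by
      have : ∀ x, (i1 x : ℕ) = if x = ⟨0, hm⟩ then 1 else 0 := by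
        intro x; by_cases hx : x = ⟨0, hm⟩ <;> simp [hi1, hx]
      rw [Finset.sum_congr rfl fun x _ => this x, Finset.sum_ite_eq' Finset.univ]
      simp
    have hi10 : i1 ≠ 0 := by
      intro h
      have := congrFun h ⟨0, hm⟩
      simp [hi1] at this
    have hval : fN n (i1, 0) = -1 := by
      simp [fN, hi10, hsum]
    have hdvd : Finset.univ.gcd (fN n) ∣ -1 := by
      rw [← hval]
      exact Finset.gcd_dvd (Finset.mem_univ (i1, 0))
    have hunit : IsUnit (Finset.univ.gcd (fN n)) := isUnit_of_dvd_unit hdvd (by norm_num)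
    rcases Int.isUnit_iff.mp hunit with h | h
    · exact h
    · have hnorm := Finset.normalize_gcd (s := Finset.univ) (f := fN n)
      rw [h, (by decide : normalize (-1:ℤ) = 1)] at hnorm
      exact absurd hnorm (by norm_num)
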